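/- arXiv:1805.05550 — 2 statements merged into one kernel-verified Lean document; each statement's English description precedes it below -/
import Mathlib

section
/- Let λ > 0, x₀ ∈ ℝ, φ₀ ∈ (0,1), and define φ(x) = φ₀·e^{-(√λ/2)(x - x₀)} / (1 - φ₀² + φ₀²·e^{-√λ(x - x₀)})^{1/2}. Then 0 < φ(x) < 1 for all x, φ is strictly decreasing, φ(x) → 1 as x → -∞, and φ(x) → 0 as x → +∞. -/
/-!
Put `s = √λ` and `c = (1 - φ₀²) / φ₀²`. Dividing numerator and denominator by
`φ₀ e^{-s(x - x₀)/2}` turns the formula into `φ x = (1 + c e^{s(x - x₀)})^{-1/2}`, the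
profile `t ↦ (1 + c eᵗ)^{-1/2}` evaluated at `t = s(x - x₀)`. Since `c > 0` this profile lies in
`(0, 1)`, is strictly decreasing, and tends to `1` and `0` at `∓∞`; the affine
reparametrisation preserves all of this because `s > 0`.
-/

open Real Filter

noncomputable def wallProfile (c t : ℝ) : ℝ := (√(1 + c * exp t))⁻¹

lemma one_lt_one_add_mul_exp {c : ℝ} (hc : 0 < c) (t : ℝ) : 1 < 1 + c * exp t := by
  have := exp_pos t
  nlinarith

namespace wallProfile

variable {c : ℝ}

lemma one_lt_sqrt (hc : 0 < c) (t : ℝ) : 1 < √(1 + c * exp t) :=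
  (lt_sqrt zero_le_one).mpr (by simpa using one_lt_one_add_mul_exp hc t)

lemma pos (hc : 0 < c) (t : ℝ) : 0 < wallProfile c t :=
  inv_pos.mpr (one_pos.trans (one_lt_sqrt hc t))

lemma lt_one (hc : 0 < c) (t : ℝ) : wallProfile c t < 1 :=
  inv_lt_one_of_one_lt₀ (one_lt_sqrt hc t)

lemma strictAnti (hc : 0 < c) : StrictAnti (wallProfile c) := by
  intro a b hab
  have hexp : 1 + c * exp a < 1 + c * exp b := by gcongr
  have hsqrt : √(1 + c * exp a) < √(1 + c * exp b) :=
    sqrt_lt_sqrt (one_pos.trans (one_lt_one_add_mul_exp hc a)).le hexp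
  exact inv_strictAntiOn (one_pos.trans (one_lt_sqrt hc a)) (one_pos.trans (one_lt_sqrt hc b))
    hsqrt

lemma tendsto_atBot (c : ℝ) : Tendsto (wallProfile c) atBot (nhds 1) := by
  have h := (((tendsto_exp_atBot.const_mul c).const_add 1).sqrt).inv₀ (by simp)
  rw [mul_zero, add_zero, sqrt_one, inv_one] at h
  exact h

lemma tendsto_atTop (hc : 0 < c) : Tendsto (wallProfile c) atTop (nhds 0) :=
  tendsto_inv_atTop_zero.comp <| tendsto_sqrt_atTop.comp <|
    tendsto_atTop_add_const_left atTop 1 (tendsto_exp_atTop.const_mul_atTop hc)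

end wallProfile

lemma mul_exp_div_sqrt_eq_wallProfile {a : ℝ} (ha : 0 < a) (y : ℝ) :
    a * exp (-y / 2) / √(1 - a ^ 2 + a ^ 2 * exp (-y)) = wallProfile ((1 - a ^ 2) / a ^ 2) y := by
  have hnum : a * exp (-y / 2) = √(a ^ 2 * exp (-y)) := by
    rw [sqrt_mul (sq_nonneg a), sqrt_sq ha.le, ← exp_half]
  have hquot : (1 - a ^ 2 + a ^ 2 * exp (-y)) / (a ^ 2 * exp (-y)) =
      1 + (1 - a ^ 2) / a ^ 2 * exp y := by
    rw [exp_neg]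
    field_simp
    ring
  rw [hnum, ← sqrt_div (by positivity), ← inv_div, sqrt_inv, hquot, wallProfile]

lemma tendsto_mul_sub_atTop {s : ℝ} (hs : 0 < s) (x₀ : ℝ) :
    Tendsto (fun x => s * (x - x₀)) atTop atTop :=
  (tendsto_atTop_add_const_right atTop (-x₀) tendsto_id).const_mul_atTop hs

lemma tendsto_mul_sub_atBot {s : ℝ} (hs : 0 < s) (x₀ : ℝ) :
    Tendsto (fun x => s * (x - x₀)) atBot atBot :=
  (tendsto_atBot_add_const_right atBot (-x₀) tendsto_id).const_mul_atBot hs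

theorem stmt8 (lam x₀ φ₀ : ℝ) (hlam : 0 < lam) (hφ₀ : φ₀ ∈ Set.Ioo (0:ℝ) 1) (φ : ℝ → ℝ)
    (hφ : φ = fun x => φ₀ * Real.exp (-(Real.sqrt lam / 2) * (x - x₀)) /
      Real.sqrt (1 - φ₀ ^ 2 + φ₀ ^ 2 * Real.exp (-Real.sqrt lam * (x - x₀)))) :
    (∀ x, 0 < φ x ∧ φ x < 1) ∧ StrictAnti φ ∧
    Tendsto φ atBot (nhds 1) ∧ Tendsto φ atTop (nhds 0) := by
  obtain ⟨hφ₀_pos, hφ₀_lt_one⟩ := hφ₀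
  set s := √lam
  set c := (1 - φ₀ ^ 2) / φ₀ ^ 2
  have hs : 0 < s := sqrt_pos.mpr hlam
  have hc : 0 < c := div_pos (by nlinarith) (by positivity)
  have hφ_eq : φ = wallProfile c ∘ fun x => s * (x - x₀) := by
    ext x
    rw [hφ, Function.comp_apply, ← mul_exp_div_sqrt_eq_wallProfile hφ₀_pos]
    ring_nf
  have hmono : StrictMono fun x => s * (x - x₀) := fun a b hab => by dsimp only; gcongr
  rw [hφ_eq]
  exact ⟨fun x => ⟨wallProfile.pos hc _, wallProfile.lt_one hc _⟩,
    (wallProfile.strictAnti hc).comp_strictMono hmono,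
    (wallProfile.tendsto_atBot c).comp (tendsto_mul_sub_atBot hs x₀),
    (wallProfile.tendsto_atTop hc).comp (tendsto_mul_sub_atTop hs x₀)⟩
end

section
/- Let β > 0, h₀ continuous positive with h₀(x) = e^{-β|x|} for |x| ≥ 1, dμ = h₀ dx. For every a ∈ ℝ and b ∈ (0, β) there exists C(b) > 0 such that for all absolutely continuous v with v' ∈ L²(dx), v ∈ L²(dμ), and ∫ v dμ = 0: ∫_ℝ exp(a|v|) dμ ≤ C(b)·exp( (a²/(4b))·∫_ℝ (v')² dx ). -/
/-!
Writing `v x ⋅ ∫ h₀ = ∫ (v x - v y) h₀(y) dy` (mean zero) and bounding the oscillation through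
`|a| |v'| ≤ b + (a² / 4b) v'²`, one gets the pointwise estimate
`|a| |v x| ≤ b |x| + b ∫ |y| h₀ / ∫ h₀ + (a² / 4b) ∫ v'²`.
Hence `exp (a |v|) h₀` is dominated by a multiple of `exp (b |x|) h₀`, which is integrable
because `b < β`.
-/

open Real MeasureTheory

theorem integrable_exp_neg_mul_abs {d : ℝ} (hd : 0 < d) :
    Integrable (fun x : ℝ => exp (-d * |x|)) := by
  rw [← integrableOn_univ, ← Set.Iic_union_Ioi (a := 0), integrableOn_union]
  constructor
  · refine (integrableOn_exp_mul_Iic hd 0).congr_fun (fun x hx => ?_) measurableSet_Iic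
    rw [abs_of_nonpos hx, neg_mul_neg]
  · refine (integrableOn_exp_mul_Ioi (neg_neg_of_pos hd) 0).congr_fun (fun x hx => ?_)
      measurableSet_Ioi
    rw [abs_of_pos hx]

theorem integrable_exp_mul_abs_mul_of_eq_exp_neg_mul_abs {β c : ℝ} {h₀ : ℝ → ℝ}
    (hc : Continuous h₀) (hform : ∀ x : ℝ, 1 ≤ |x| → h₀ x = exp (-β * |x|))
    (hcβ : c < β) :
    Integrable (fun x => exp (c * |x|) * h₀ x) := by
  rw [← integrableOn_univ, ← Set.union_compl_self (Set.Icc (-1 : ℝ) 1), integrableOn_union]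
  refine ⟨(by fun_prop : Continuous fun x => exp (c * |x|) * h₀ x).integrableOn_Icc, ?_⟩
  refine (integrable_exp_neg_mul_abs (sub_pos.2 hcβ)).integrableOn.congr_fun (fun x hx => ?_)
    measurableSet_Icc.compl
  have hx : 1 ≤ |x| := by
    rw [Set.mem_compl_iff, Set.mem_Icc, ← abs_le] at hx
    exact (not_le.1 hx).le
  rw [hform x hx, ← exp_add]
  ring_nf

theorem MeasureTheory.Integrable.abs_mul_of_exp_mul_abs_mul {w : ℝ → ℝ} {c : ℝ} (hc : 0 < c)
    (hw : AEStronglyMeasurable w) (h : Integrable (fun x => exp (c * |x|) * w x)) :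
    Integrable (fun x => |x| * w x) := by
  refine (h.norm.const_mul c⁻¹).mono' (continuous_abs.aestronglyMeasurable.mul hw)
    (ae_of_all _ fun x => ?_)
  have hx : |x| ≤ c⁻¹ * exp (c * |x|) := by
    rw [le_inv_mul_iff₀ hc]
    linarith [add_one_le_exp (c * |x|)]
  simp only [norm_mul, Real.norm_eq_abs, abs_abs, abs_exp, ← mul_assoc]
  gcongr

theorem abs_mul_abs_le_add_sq_div (a f : ℝ) {b : ℝ} (hb : 0 < b) :
    |a| * |f| ≤ b + a ^ 2 / (4 * b) * f ^ 2 := by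
  have hsq : a ^ 2 / (4 * b) * f ^ 2 = (|a| * |f|) ^ 2 / (4 * b) := by
    rw [mul_pow, sq_abs, sq_abs]; ring
  have hamgm :
      b + (|a| * |f|) ^ 2 / (4 * b) - |a| * |f| = (2 * b - |a| * |f|) ^ 2 / (4 * b) := by
    field_simp; ring
  rw [hsq, ← sub_nonneg, hamgm]
  positivity

theorem abs_mul_abs_intervalIntegral_le {f : ℝ → ℝ} (hf : MemLp f 2) (a : ℝ) {b : ℝ}
    (hb : 0 < b) (x y : ℝ) :
    |a| * |∫ u in y..x, f u| ≤ b * |x - y| + a ^ 2 / (4 * b) * ∫ u, f u ^ 2 := by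
  have hsq : Integrable (fun u => f u ^ 2) := (memLp_two_iff_integrable_sq hf.1).1 hf
  have : IsFiniteMeasure (volume.restrict (Set.uIoc y x)) := by
    rw [isFiniteMeasure_restrict, volume_uIoc]; exact ENNReal.ofReal_ne_top
  have hf1 : IntegrableOn f (Set.uIoc y x) := (hf.restrict _).integrable one_le_two
  calc |a| * |∫ u in y..x, f u| ≤ |a| * ∫ u in Set.uIoc y x, |f u| := by
        gcongr
        exact intervalIntegral.norm_integral_le_integral_norm_uIoc (f := f) (μ := volume)
    _ = ∫ u in Set.uIoc y x, |a| * |f u| := by rw [integral_const_mul]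
    _ ≤ ∫ u in Set.uIoc y x, (b + a ^ 2 / (4 * b) * f u ^ 2) :=
        integral_mono (hf1.abs.const_mul _)
          ((integrable_const b).add (hsq.integrableOn.const_mul _))
          fun u => abs_mul_abs_le_add_sq_div _ _ hb
    _ = b * |x - y| + a ^ 2 / (4 * b) * ∫ u in Set.uIoc y x, f u ^ 2 := by
        rw [integral_add (integrable_const b) (hsq.integrableOn.const_mul _), setIntegral_const,
          integral_const_mul, measureReal_def, volume_uIoc, ENNReal.toReal_ofReal (abs_nonneg _),
          abs_sub_comm, smul_eq_mul, mul_comm]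
    _ ≤ b * |x - y| + a ^ 2 / (4 * b) * ∫ u, f u ^ 2 := by
        have hsub : ∫ u in Set.uIoc y x, f u ^ 2 ≤ ∫ u, f u ^ 2 :=
          setIntegral_le_integral hsq (ae_of_all _ fun u => sq_nonneg _)
        gcongr

theorem abs_mul_integral_le_integral_abs_sub_mul {α : Type*} [MeasurableSpace α]
    {μ : Measure α} {v w : α → ℝ} (hw : Integrable w μ) (hw0 : 0 ≤ w)
    (hvw : Integrable (fun y => v y * w y) μ) (hmean : ∫ y, v y * w y ∂μ = 0) (c : ℝ) :
    |c| * ∫ y, w y ∂μ ≤ ∫ y, |c - v y| * w y ∂μ := by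
  have hcw : c * ∫ y, w y ∂μ = ∫ y, (c - v y) * w y ∂μ := by
    simp_rw [sub_mul]
    rw [integral_sub (hw.const_mul c) hvw, hmean, sub_zero, integral_const_mul]
  calc |c| * ∫ y, w y ∂μ = |∫ y, (c - v y) * w y ∂μ| := by
        rw [← hcw, abs_mul, abs_of_nonneg (integral_nonneg hw0)]
    _ ≤ ∫ y, |(c - v y) * w y| ∂μ := abs_integral_le_integral_abs
    _ = ∫ y, |c - v y| * w y ∂μ := by simp_rw [abs_mul, abs_of_nonneg (hw0 _)]

theorem abs_mul_abs_le_of_integral_mul_eq_zero {v w : ℝ → ℝ} (hw : Integrable w)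
    (hw0 : 0 ≤ w) (hw_pos : 0 < ∫ y, w y) (hxw : Integrable (fun y => |y| * w y))
    (hvw : Integrable (fun y => v y * w y)) (hmean : ∫ y, v y * w y = 0) {a b K : ℝ}
    (hb : 0 ≤ b) (hosc : ∀ x y, |a| * |v x - v y| ≤ b * |x - y| + K) (x : ℝ) :
    |a| * |v x| ≤ b * |x| + (b * (∫ y, |y| * w y) / (∫ y, w y) + K) := by
  have hbound :
      |a| * |v x| * (∫ y, w y) ≤ (b * |x| + K) * (∫ y, w y) + b * ∫ y, |y| * w y :=
    calc |a| * |v x| * (∫ y, w y) ≤ |a| * ∫ y, |v x - v y| * w y := by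
          rw [mul_assoc]
          gcongr
          exact abs_mul_integral_le_integral_abs_sub_mul hw hw0 hvw hmean _
      _ = ∫ y, |a| * |v x - v y| * w y := by
          rw [← integral_const_mul]; simp_rw [mul_assoc]
      _ ≤ ∫ y, ((b * |x| + K) * w y + b * (|y| * w y)) := by
          refine integral_mono_of_nonneg
            (ae_of_all _ fun y => mul_nonneg (by positivity) (hw0 y))
            ((hw.const_mul _).add (hxw.const_mul _)) (ae_of_all _ fun y => ?_)
          calc |a| * |v x - v y| * w y ≤ (b * (|x| + |y|) + K) * w y := by
                gcongr
                · exact hw0 y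
                · exact (hosc x y).trans (by gcongr; exact abs_sub _ _)
            _ = (b * |x| + K) * w y + b * (|y| * w y) := by ring
      _ = (b * |x| + K) * (∫ y, w y) + b * ∫ y, |y| * w y := by
          rw [integral_add (hw.const_mul _) (hxw.const_mul _), integral_const_mul,
            integral_const_mul]
  rw [← le_div_iff₀ hw_pos] at hbound
  exact hbound.trans_eq (by field_simp; ring)

theorem lintegral_ofReal_le_ofReal_mul_integral {α : Type*} [MeasurableSpace α]
    {μ : Measure α} {f g : α → ℝ} (hg : Integrable g μ) (hg0 : 0 ≤ g) {M : ℝ} (hM : 0 ≤ M)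
    (hfg : ∀ x, f x ≤ M * g x) :
    ∫⁻ x, ENNReal.ofReal (f x) ∂μ ≤ ENNReal.ofReal (M * ∫ x, g x ∂μ) :=
  calc ∫⁻ x, ENNReal.ofReal (f x) ∂μ ≤ ∫⁻ x, ENNReal.ofReal (M * g x) ∂μ :=
        lintegral_mono fun x => ENNReal.ofReal_le_ofReal (hfg x)
    _ = ENNReal.ofReal (M * ∫ x, g x ∂μ) := by
        rw [← integral_const_mul, ofReal_integral_eq_lintegral_ofReal (hg.const_mul M)
          (ae_of_all _ fun x => mul_nonneg hM (hg0 x))]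

theorem stmt17_general (β : ℝ) (h₀ : ℝ → ℝ)
    (hc : Continuous h₀) (hpos : ∀ x, 0 < h₀ x)
    (hform : ∀ x : ℝ, 1 ≤ |x| → h₀ x = Real.exp (-β * |x|))
    (a b : ℝ) (hb : 0 < b) (hbβ : b < β) :
    ∃ C > 0, ∀ v : ℝ → ℝ,
      Differentiable ℝ v →
      (∀ a' b' : ℝ, v b' - v a' = ∫ x in a'..b', deriv v x) →
      Integrable (fun x => (deriv v x) ^ 2) →
      Integrable (fun x => (v x) ^ 2 * h₀ x) →
      Integrable (fun x => v x * h₀ x) →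
      (∫ x : ℝ, v x * h₀ x) = 0 →
      (∫⁻ x : ℝ, ENNReal.ofReal (Real.exp (a * |v x|) * h₀ x)) ≤
        ENNReal.ofReal (C * Real.exp ((a ^ 2 / (4 * b)) * ∫ x : ℝ, (deriv v x) ^ 2)) := by
  have hh₀0 : 0 ≤ h₀ := fun x => (hpos x).le
  have hg0 : ∀ x, 0 ≤ exp (b * |x|) * h₀ x := fun x => mul_nonneg (exp_pos _).le (hh₀0 x)
  have hg := integrable_exp_mul_abs_mul_of_eq_exp_neg_mul_abs hc hform hbβ
  have hh₀ : Integrable h₀ := by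
    simpa using integrable_exp_mul_abs_mul_of_eq_exp_neg_mul_abs hc hform (hb.trans hbβ)
  have hH := integral_pos_of_integrable_nonneg_nonzero hc hh₀ hh₀0 (hpos 0).ne'
  have hI := integral_pos_of_integrable_nonneg_nonzero (by fun_prop) hg hg0
    (mul_pos (exp_pos _) (hpos 0)).ne'
  refine ⟨exp (b * (∫ x, |x| * h₀ x) / ∫ x, h₀ x) * ∫ x, exp (b * |x|) * h₀ x,
    by positivity, fun v _ hFTC hderiv _ hvh hmean => ?_⟩
  set K := a ^ 2 / (4 * b) * ∫ x, deriv v x ^ 2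
  have hosc : ∀ x y, |a| * |v x - v y| ≤ b * |x - y| + K := fun x y => by
    rw [hFTC y x]
    exact abs_mul_abs_intervalIntegral_le
      ((memLp_two_iff_integrable_sq (measurable_deriv v).aestronglyMeasurable).2 hderiv) a hb x y
  have hpt := abs_mul_abs_le_of_integral_mul_eq_zero hh₀ hh₀0 hH
    (hg.abs_mul_of_exp_mul_abs_mul hb hc.aestronglyMeasurable) hvh hmean hb.le hosc
  have hexp : ∀ x, exp (a * |v x|) * h₀ x ≤
      exp (b * (∫ y, |y| * h₀ y) / (∫ y, h₀ y) + K) * (exp (b * |x|) * h₀ x) := fun x => by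
    rw [← mul_assoc, ← exp_add]
    refine mul_le_mul_of_nonneg_right (exp_le_exp.2 ?_) (hh₀0 x)
    linarith [hpt x, mul_le_mul_of_nonneg_right (le_abs_self a) (abs_nonneg (v x))]
  calc ∫⁻ x, ENNReal.ofReal (exp (a * |v x|) * h₀ x)
      ≤ ENNReal.ofReal (exp (b * (∫ y, |y| * h₀ y) / (∫ y, h₀ y) + K) *
          ∫ x, exp (b * |x|) * h₀ x) :=
        lintegral_ofReal_le_ofReal_mul_integral hg hg0 (exp_pos _).le hexp
    _ = _ := by rw [exp_add]; ring_nf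

theorem stmt17 (β : ℝ) (hβ : 0 < β) (h₀ : ℝ → ℝ)
    (hc : Continuous h₀) (hpos : ∀ x, 0 < h₀ x)
    (hform : ∀ x : ℝ, 1 ≤ |x| → h₀ x = Real.exp (-β * |x|))
    (a b : ℝ) (hb : 0 < b) (hbβ : b < β) :
    ∃ C > 0, ∀ v : ℝ → ℝ,
      Differentiable ℝ v →
      (∀ a' b' : ℝ, v b' - v a' = ∫ x in a'..b', deriv v x) →
      Integrable (fun x => (deriv v x) ^ 2) →
      Integrable (fun x => (v x) ^ 2 * h₀ x) →
      Integrable (fun x => v x * h₀ x) →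
      (∫ x : ℝ, v x * h₀ x) = 0 →
      (∫⁻ x : ℝ, ENNReal.ofReal (Real.exp (a * |v x|) * h₀ x)) ≤
        ENNReal.ofReal (C * Real.exp ((a ^ 2 / (4 * b)) * ∫ x : ℝ, (deriv v x) ^ 2)) :=
  stmt17_general β h₀ hc hpos hform a b hb hbβ
end
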